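/- arXiv:0906.5129 — 2 statements merged into one kernel-verified Lean document; each statement's English description precedes it below -/
import Mathlib

section
/- Let a = (a_1,...,a_s) ∈ ℕ^s, a* = max_i a_i, and assume d ≥ s(a*+1)/2. Let u be a monomial of degree ≥ 2 in R^[d] with φ_d(u) divisible by y^a, and u ∉ in_{≺_Γ}(ker φ_d). Set x_b = mv_{≺_Γ}(u) and x_c = mv_{≺_Γ}(u/x_b). Then y^a divides y^{b+c} = φ_d(x_b x_c); that is, x_b x_c ∈ φ_d^{-1}(⟨y^a⟩). -/
open MvPolynomial

/-- A term order on monomials (exponent vectors) of `MvPolynomial σ K`. -/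
structure TermOrder (σ : Type*) where
  lo : LinearOrder (σ →₀ ℕ)
  zero_le : ∀ a : σ →₀ ℕ, lo.le 0 a
  add_lt : ∀ a b c : σ →₀ ℕ, lo.lt a b → lo.lt (a + c) (b + c)

/-- The exponent vector of the initial (leading) term of `f`. -/
noncomputable def TermOrder.lead {σ K : Type*} [Field K]
    (t : TermOrder σ) (f : MvPolynomial σ K) : σ →₀ ℕ :=
  letI := t.lo
  WithBot.unbotD 0 f.support.max

/-- The initial ideal of `I` w.r.t. the term order `t`. -/
noncomputable def initialIdeal {σ K : Type*} [Field K]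
    (t : TermOrder σ) (I : Ideal (MvPolynomial σ K)) : Ideal (MvPolynomial σ K) :=
  Ideal.span { m : MvPolynomial σ K | ∃ f ∈ I, f ≠ 0 ∧ m = monomial (t.lead f) (1 : K) }

/-- `G` is a Gröbner basis of `I` w.r.t. `t`. -/
def IsGB {σ K : Type*} [Field K] (t : TermOrder σ)
    (I : Ideal (MvPolynomial σ K)) (G : Set (MvPolynomial σ K)) : Prop :=
  G ⊆ (I : Set (MvPolynomial σ K)) ∧
    initialIdeal t I = Ideal.span ((fun g => monomial (t.lead g) (1 : K)) '' G)

/-- Total degree of an exponent vector. -/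
def Fdeg {σ : Type*} (m : σ →₀ ℕ) : ℕ := m.sum fun _ n => n

/-- `t` is a reverse lexicographic order w.r.t. the strict variable order `vlt`. -/
def IsRevLex {σ : Type*} (vlt : σ → σ → Prop) (t : TermOrder σ) : Prop :=
  ∀ α β : σ →₀ ℕ, t.lo.lt α β ↔
    Fdeg α < Fdeg β ∨
      (Fdeg α = Fdeg β ∧ ∃ j, β j < α j ∧ ∀ k, vlt k j → α k = β k)

/-- Variables of `R^[d]`: exponent vectors of degree `d` monomials of `K[y_1,…,y_s]`. -/
abbrev Vd (s d : ℕ) := {a : Fin s → ℕ // ∑ i, a i = d}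

/-- The map `φ_d : R^[d] → S`, `x_a ↦ y^a`. -/
noncomputable def phi (K : Type*) [Field K] (s d : ℕ) :
    MvPolynomial (Vd s d) K →ₐ[K] MvPolynomial (Fin s) K :=
  aeval fun a : Vd s d => ∏ i, X i ^ a.1 i

/-- Lexicographic strict order on `Fin s → ℕ`. -/
def lexLt {s : ℕ} (a b : Fin s → ℕ) : Prop :=
  ∃ j, (∀ i, i < j → a i = b i) ∧ a j < b j

/-- `Γ(a)`: the nondecreasing rearrangement of `a`. -/
noncomputable def Gam {s : ℕ} (a : Fin s → ℕ) : Fin s → ℕ := a ∘ Tuple.sort a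

/-- The order on the variables of `R^[d]` : `x_a ≺_Γ x_b` iff `Γ(b) <lex Γ(a)`,
or `Γ(b) = Γ(a)` and `b <lex a`. -/
def varGammaLt {s : ℕ} (a b : Fin s → ℕ) : Prop :=
  lexLt (Gam b) (Gam a) ∨ (Gam b = Gam a ∧ lexLt b a)

/-- `v` is `mv_{≺_Γ}(u)`: the `≺_Γ`-smallest variable `x_c` with `y^c ∣ φ_d(u)`. -/
def IsMvGamma {K : Type*} [Field K] {s d : ℕ} (u : Vd s d →₀ ℕ) (v : Vd s d) : Prop :=
  (∏ i, (X i : MvPolynomial (Fin s) K) ^ v.1 i) ∣ phi K s d (monomial u 1) ∧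
    ∀ c : Vd s d, (∏ i, (X i : MvPolynomial (Fin s) K) ^ c.1 i) ∣ phi K s d (monomial u 1) →
      v = c ∨ varGammaLt v.1 c.1


section Aux

lemma lexLt_asymm {s : ℕ} {p q : Fin s → ℕ} (h1 : lexLt p q) (h2 : lexLt q p) : False := by
  obtain ⟨j1, e1, l1⟩ := h1
  obtain ⟨j2, e2, l2⟩ := h2
  rcases lt_trichotomy j1 j2 with h | h | h
  · have := e2 j1 h; omega
  · subst h; omega
  · have := e1 j2 h; omega

lemma lexLt_ne {s : ℕ} {p q : Fin s → ℕ} (h1 : lexLt p q) : p ≠ q := by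
  rintro rfl
  obtain ⟨j, _, l⟩ := h1; omega

noncomputable def Ncard {s : ℕ} (f : Fin s → ℕ) (t : ℕ) : ℕ :=
  Fintype.card {x : Fin s // f x ≤ t}

lemma gam_le_iff {s : ℕ} (f : Fin s → ℕ) (t : ℕ) (l : Fin s) :
    Gam f l ≤ t ↔ (l : ℕ) < Ncard f t := by
  have h := Tuple.lt_card_le_iff_apply_le_of_monotone (f := f ∘ Tuple.sort f) (a := t)
    (j := l) (Tuple.monotone_sort f)
  rw [← Fintype.card_subtype] at h
  have e : Fintype.card {x : Fin s // (f ∘ Tuple.sort f) x ≤ t} = Ncard f t :=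
    Fintype.card_congr ((Tuple.sort f).subtypeEquiv (fun x => Iff.rfl))
  rw [Gam]
  rw [e] at h
  exact h.symm

lemma gam_lexLt {s : ℕ} (b c : Fin s → ℕ) (i j : Fin s) (hij : i ≠ j)
    (h2 : b i + 2 ≤ b j)
    (hci : c i = b i + 1) (hcj : c j = b j - 1)
    (hcx : ∀ x, x ≠ i → x ≠ j → c x = b x) :
    lexLt (Gam b) (Gam c) := by
  set k := b i with hk
  have hN_lt : ∀ t, t < k → Ncard c t = Ncard b t := by
    intro t ht
    refine Fintype.card_congr (Equiv.subtypeEquivRight fun x => ?_)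
    by_cases hxi : x = i
    · subst hxi; rw [hci]; omega
    · by_cases hxj : x = j
      · subst hxj; rw [hcj]; omega
      · rw [hcx x hxi hxj]
  have hNk : Ncard c k + 1 = Ncard b k := by
    rw [Ncard, Ncard, Fintype.card_subtype, Fintype.card_subtype]
    have hfe : Finset.univ.filter (fun x => c x ≤ k) =
        (Finset.univ.filter (fun x => b x ≤ k)).erase i := by
      ext x
      simp only [Finset.mem_filter, Finset.mem_univ, true_and, Finset.mem_erase]
      by_cases hxi : x = i
      · subst hxi; rw [hci]; simp
      · by_cases hxj : x = j
        · subst hxj; rw [hcj]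
          constructor
          · intro h; omega
          · rintro ⟨_, h⟩; omega
        · rw [hcx x hxi hxj]; tauto
    rw [hfe, Finset.card_erase_add_one]
    simp [hk]
  have hK1 : 0 < Ncard b k := Fintype.card_pos_iff.2 ⟨⟨i, le_rfl⟩⟩
  have hKs : Ncard b k ≤ s := by
    simpa [Ncard] using (Fintype.card_subtype_le (fun x : Fin s => b x ≤ k))
  refine ⟨⟨Ncard b k - 1, by omega⟩, fun l hl => ?_, ?_⟩
  · have hl' : (l : ℕ) < Ncard b k - 1 := hl
    have hq : Gam c l ≤ k := (gam_le_iff c k l).2 (by omega)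
    have hp : Gam b l ≤ k := (gam_le_iff b k l).2 (by omega)
    apply le_antisymm
    · rcases eq_or_lt_of_le hq with h | h
      · omega
      · have h3 := (gam_le_iff c (Gam c l) l).1 le_rfl
        rw [hN_lt _ h] at h3
        exact (gam_le_iff b (Gam c l) l).2 h3
    · rcases eq_or_lt_of_le hp with h | h
      · omega
      · have h3 := (gam_le_iff b (Gam b l) l).1 le_rfl
        rw [← hN_lt _ h] at h3
        exact (gam_le_iff c (Gam b l) l).2 h3
  · have hp : Gam b ⟨Ncard b k - 1, by omega⟩ ≤ k :=
      (gam_le_iff b k _).2 (by simp; omega)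
    have hq : ¬ Gam c ⟨Ncard b k - 1, by omega⟩ ≤ k := by
      intro h
      have := (gam_le_iff c k _).1 h
      simp at this
      omega
    omega

def Amap {s d : ℕ} (w : Vd s d →₀ ℕ) (i : Fin s) : ℕ := w.sum fun v k => k * v.1 i

lemma phi_monomial (K : Type*) [Field K] (s d : ℕ) (w : Vd s d →₀ ℕ) :
    phi K s d (monomial w 1) = ∏ i, (X i : MvPolynomial (Fin s) K) ^ Amap w i := by
  rw [phi, aeval_monomial, map_one, one_mul]
  rw [Finsupp.prod]
  have : ∀ v ∈ w.support, (∏ i, (X i : MvPolynomial (Fin s) K) ^ v.1 i) ^ w v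
      = ∏ i, (X i : MvPolynomial (Fin s) K) ^ (w v * v.1 i) := by
    intro v _
    rw [← Finset.prod_pow]
    exact Finset.prod_congr rfl fun i _ => by rw [← pow_mul, mul_comm]
  rw [Finset.prod_congr rfl this, Finset.prod_comm]
  refine Finset.prod_congr rfl fun i _ => ?_
  rw [Finset.prod_pow_eq_pow_sum, Amap, Finsupp.sum]

lemma prod_X_pow_eq_monomial' (K : Type*) [Field K] {s : ℕ} (v : Fin s → ℕ) :
    (∏ i, (X i : MvPolynomial (Fin s) K) ^ v i)
      = monomial (Finsupp.equivFunOnFinite.symm v) (1 : K) := by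
  rw [← prod_X_pow_eq_monomial]
  refine (Finset.prod_subset (Finset.subset_univ _) fun x _ hx => ?_).symm
  rw [Finsupp.notMem_support_iff] at hx
  simp only [Finsupp.equivFunOnFinite_symm_apply_apply] at hx ⊢
  rw [hx, pow_zero]

lemma prodX_dvd_iff (K : Type*) [Field K] {s : ℕ} (v w : Fin s → ℕ) :
    ((∏ i, (X i : MvPolynomial (Fin s) K) ^ v i) ∣ ∏ i, X i ^ w i) ↔ ∀ i, v i ≤ w i := by
  rw [prod_X_pow_eq_monomial', prod_X_pow_eq_monomial', monomial_dvd_monomial]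
  simp only [one_ne_zero, false_or, dvd_refl, and_true]
  rw [Finsupp.le_def]
  exact forall_congr' fun i => by simp

lemma Amap_add {s d : ℕ} (w1 w2 : Vd s d →₀ ℕ) (i : Fin s) :
    Amap (w1 + w2) i = Amap w1 i + Amap w2 i := by
  rw [Amap, Amap, Amap]
  exact Finsupp.sum_add_index' (fun v => by simp) (fun v k1 k2 => add_mul k1 k2 _)

lemma Amap_single {s d : ℕ} (v : Vd s d) (i : Fin s) :
    Amap (Finsupp.single v 1) i = v.1 i := by
  rw [Amap, Finsupp.sum_single_index] <;> simp

lemma exchange {s d : ℕ} (A : Fin s → ℕ) (b : Vd s d)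
    (hbA : ∀ x, b.1 x ≤ A x)
    (hmin : ∀ c : Vd s d, (∀ x, c.1 x ≤ A x) → b = c ∨ varGammaLt b.1 c.1)
    (i : Fin s) (hi : b.1 i < A i) (j : Fin s) : b.1 j ≤ b.1 i + 1 := by
  by_contra hcon
  push_neg at hcon
  have hij : i ≠ j := by intro h; subst h; omega
  set cf : Fin s → ℕ :=
    fun x => if x = i then b.1 i + 1 else if x = j then b.1 j - 1 else b.1 x with hcf
  have hci : cf i = b.1 i + 1 := by simp [hcf]
  have hcj : cf j = b.1 j - 1 := by simp [hcf, hij.symm]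
  have hcx : ∀ x, x ≠ i → x ≠ j → cf x = b.1 x := fun x h1 h2 => by simp [hcf, h1, h2]
  have hsum : ∑ x, cf x = d := by
    have key : ∀ x ∈ Finset.univ,
        cf x + (if x = j then 1 else 0) = b.1 x + (if x = i then 1 else 0) := by
      intro x _
      by_cases h1 : x = i
      · subst h1; rw [hci, if_neg hij, if_pos rfl]
      · by_cases h2 : x = j
        · subst h2; rw [hcj, if_pos rfl, if_neg (Ne.symm hij)]; omega
        · rw [hcx x h1 h2, if_neg h1, if_neg h2]
    have hs := Finset.sum_congr rfl key
    rw [Finset.sum_add_distrib, Finset.sum_add_distrib] at hs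
    simp only [Finset.sum_ite_eq', Finset.mem_univ, if_true] at hs
    have hb2 := b.2
    omega
  have hcA : ∀ x, cf x ≤ A x := by
    intro x
    by_cases h1 : x = i
    · subst h1; rw [hci]; omega
    · by_cases h2 : x = j
      · subst h2; rw [hcj]; have := hbA x; omega
      · rw [hcx x h1 h2]; exact hbA x
  rcases hmin ⟨cf, hsum⟩ hcA with h | h
  · have h' := congrArg (fun z : Vd s d => z.1 i) h
    simp only at h'
    rw [hci] at h'
    omega
  · have hlex : lexLt (Gam b.1) (Gam cf) := gam_lexLt b.1 cf i j hij (by omega) hci hcj hcx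
    rcases h with h | ⟨heq, _⟩
    · exact lexLt_asymm hlex h
    · rw [heq] at hlex
      exact lexLt_ne hlex rfl

end Aux

/-- if `d ≥ s(a*+1)/2`, `u` a monomial of degree ≥ 2 with `y^a ∣ φ_d(u)`
and `u ∉ in_{≺_Γ}(ker φ_d)`, then for `x_b = mv_{≺_Γ}(u)` and `x_c = mv_{≺_Γ}(u/x_b)`
the monomial `y^a` divides `y^{b+c} = φ_d(x_b x_c)`. -/
theorem stmt12 (K : Type*) [Field K] (s d : ℕ)
    (t : TermOrder (Vd s d))
    (ht : IsRevLex (fun a b : Vd s d => varGammaLt a.1 b.1) t)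
    (a : Fin s → ℕ)
    (h2d : s * (Finset.univ.sup a + 1) ≤ 2 * d)
    (u : Vd s d →₀ ℕ) (hdeg : 2 ≤ Fdeg u)
    (hdvd : (∏ i, (X i : MvPolynomial (Fin s) K) ^ a i) ∣ phi K s d (monomial u 1))
    (hu : monomial u (1 : K) ∉ initialIdeal t
      (RingHom.ker (phi K s d : MvPolynomial (Vd s d) K →+* MvPolynomial (Fin s) K)))
    (b : Vd s d) (hb : IsMvGamma (K := K) u b)
    (hbu : Finsupp.single b 1 ≤ u)
    (c : Vd s d) (hc : IsMvGamma (K := K) (u - Finsupp.single b 1) c) :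
    ∀ i, a i ≤ b.1 i + c.1 i := by
  intro i
  have hs : 0 < s := i.pos
  set A : Fin s → ℕ := Amap u with hA
  -- translate divisibility hypotheses into pointwise inequalities
  have hdvd' : ∀ x, a x ≤ A x := by
    rw [phi_monomial, prodX_dvd_iff] at hdvd
    exact hdvd
  have hbA : ∀ x, b.1 x ≤ A x := by
    have h := hb.1
    rw [phi_monomial, prodX_dvd_iff] at h
    exact h
  have hminb : ∀ v : Vd s d, (∀ x, v.1 x ≤ A x) → b = v ∨ varGammaLt b.1 v.1 := by
    intro v hv
    exact hb.2 v (by rw [phi_monomial, prodX_dvd_iff]; exact hv)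
  set A2 : Fin s → ℕ := Amap (u - Finsupp.single b 1) with hA2
  have hA2b : ∀ x, A2 x + b.1 x = A x := by
    intro x
    have he : (u - Finsupp.single b 1) + Finsupp.single b 1 = u := tsub_add_cancel_of_le hbu
    have := Amap_add (u - Finsupp.single b 1) (Finsupp.single b 1) x
    rw [he, Amap_single] at this
    simp only [hA, hA2]
    omega
  have hcA2 : ∀ x, c.1 x ≤ A2 x := by
    have h := hc.1
    rw [phi_monomial, prodX_dvd_iff] at h
    exact h
  have hminc : ∀ v : Vd s d, (∀ x, v.1 x ≤ A2 x) → c = v ∨ varGammaLt c.1 v.1 := by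
    intro v hv
    exact hc.2 v (by rw [phi_monomial, prodX_dvd_iff]; exact hv)
  -- main case analysis
  by_cases h1 : a i ≤ b.1 i
  · omega
  push_neg at h1
  have hi : b.1 i < A i := lt_of_lt_of_le h1 (hdvd' i)
  have ex1 : ∀ j, b.1 j ≤ b.1 i + 1 := exchange A b hbA hminb i hi
  have hd1 : d < s * (b.1 i + 1) := by
    have : ∑ x, b.1 x < ∑ _x : Fin s, (b.1 i + 1) :=
      Finset.sum_lt_sum (fun x _ => ex1 x) ⟨i, Finset.mem_univ i, by omega⟩
    simpa [b.2, Finset.sum_const, mul_comm] using this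
  by_cases h2 : a i ≤ b.1 i + c.1 i
  · exact h2
  push_neg at h2
  have hi2 : c.1 i < A2 i := by
    have := hA2b i
    have := hdvd' i
    omega
  have ex2 : ∀ j, c.1 j ≤ c.1 i + 1 := exchange A2 c hcA2 hminc i hi2
  have hd2 : d < s * (c.1 i + 1) := by
    have : ∑ x, c.1 x < ∑ _x : Fin s, (c.1 i + 1) :=
      Finset.sum_lt_sum (fun x _ => ex2 x) ⟨i, Finset.mem_univ i, by omega⟩
    simpa [c.2, Finset.sum_const, mul_comm] using this
  -- arithmetic conclusion
  have hsup : a i ≤ Finset.univ.sup a := Finset.le_sup (Finset.mem_univ i)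
  have hmul : s * (a i + 1) < s * (b.1 i + 1 + (c.1 i + 1)) := by
    have h3 : s * (a i + 1) ≤ s * (Finset.univ.sup a + 1) :=
      Nat.mul_le_mul_left s (by omega)
    have h4 : s * (b.1 i + 1) + s * (c.1 i + 1) = s * (b.1 i + 1 + (c.1 i + 1)) :=
      (Nat.mul_add s _ _).symm
    omega
  have hfin : a i + 1 < b.1 i + 1 + (c.1 i + 1) :=
    lt_of_mul_lt_mul_left hmul (Nat.zero_le s)
  omega
end

section
/- Let a ∈ ℕ^s, a* = max_i a_i, and d ≥ s(a*+1)/2. Then the monomial ideal L_{≺_Γ}(⟨y^a⟩), generated by all monomials of R^[d] lying in φ_d^{-1}(⟨y^a⟩) but not in in_{≺_Γ}(ker φ_d), is generated by monomials of degree at most 2. -/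
open MvPolynomial

section OrderFacts
variable {s : ℕ}

lemma lexLt_irrefl (a : Fin s → ℕ) : ¬ lexLt a a := by
  rintro ⟨j, -, hj⟩; exact lt_irrefl _ hj

lemma lexLt_trans {a b c : Fin s → ℕ} (h1 : lexLt a b) (h2 : lexLt b c) : lexLt a c := by
  obtain ⟨j1, e1, l1⟩ := h1
  obtain ⟨j2, e2, l2⟩ := h2
  rcases lt_trichotomy j1 j2 with h | h | h
  · exact ⟨j1, fun i hi => (e1 i hi).trans (e2 i (hi.trans h)), (e2 j1 h) ▸ l1⟩
  · exact ⟨j1, fun i hi => (e1 i hi).trans (e2 i (h ▸ hi)), lt_trans l1 (h ▸ l2)⟩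
  · exact ⟨j2, fun i hi => (e1 i (hi.trans h)).trans (e2 i hi), (e1 j2 h) ▸ l2⟩

lemma lexLt_total {a b : Fin s → ℕ} (h : a ≠ b) : lexLt a b ∨ lexLt b a := by
  have hne : (Finset.univ.filter fun i => a i ≠ b i).Nonempty := by
    by_contra hcon
    apply h
    funext i
    by_contra hi
    exact hcon ⟨i, Finset.mem_filter.2 ⟨Finset.mem_univ i, hi⟩⟩
  obtain ⟨j, hj, hmin⟩ := Finset.exists_min_image _ id hne
  have hj' : a j ≠ b j := (Finset.mem_filter.1 hj).2
  have heq : ∀ i, i < j → a i = b i := by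
    intro i hi
    by_contra hne'
    exact absurd (hmin i (Finset.mem_filter.2 ⟨Finset.mem_univ i, hne'⟩)) (not_le.2 hi)
  rcases lt_or_gt_of_ne hj' with h' | h'
  · exact Or.inl ⟨j, heq, h'⟩
  · exact Or.inr ⟨j, fun i hi => (heq i hi).symm, h'⟩

lemma lexLt_asymm_s13 {a b : Fin s → ℕ} (h : lexLt a b) : ¬ lexLt b a :=
  fun h' => lexLt_irrefl a (lexLt_trans h h')

lemma varGammaLt_irrefl (a : Fin s → ℕ) : ¬ varGammaLt a a := by
  rintro (h | ⟨-, h⟩) <;> exact lexLt_irrefl _ h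

lemma varGammaLt_trans {a b c : Fin s → ℕ} (h1 : varGammaLt a b) (h2 : varGammaLt b c) :
    varGammaLt a c := by
  rcases h1 with h1 | ⟨e1, l1⟩ <;> rcases h2 with h2 | ⟨e2, l2⟩
  · exact Or.inl (lexLt_trans h2 h1)
  · exact Or.inl (e2 ▸ h1)
  · exact Or.inl (e1 ▸ h2)
  · exact Or.inr ⟨e2.trans e1, lexLt_trans l2 l1⟩

lemma varGammaLt_total {a b : Fin s → ℕ} (h : a ≠ b) : varGammaLt a b ∨ varGammaLt b a := by
  by_cases hg : Gam a = Gam b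
  · rcases lexLt_total h with h' | h'
    · exact Or.inr (Or.inr ⟨hg, h'⟩)
    · exact Or.inl (Or.inr ⟨hg.symm, h'⟩)
  · rcases lexLt_total (fun hc => hg hc) with h' | h'
    · exact Or.inr (Or.inl h')
    · exact Or.inl (Or.inl h')

lemma varGammaLt_ne {a b : Fin s → ℕ} (h : varGammaLt a b) : a ≠ b := by
  rintro rfl; exact varGammaLt_irrefl a h

end OrderFacts

section Counting
variable {s : ℕ}

/-- number of coordinates of `x` that are `≤ t`. -/
def Ncnt (x : Fin s → ℕ) (t : ℕ) : ℕ := (Finset.univ.filter fun k => x k ≤ t).card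

lemma Ncnt_perm (x : Fin s → ℕ) (σ : Equiv.Perm (Fin s)) (t : ℕ) :
    Ncnt (x ∘ σ) t = Ncnt x t := by
  unfold Ncnt
  apply Finset.card_bij (fun k _ => σ k)
  · intro k hk
    simp only [Finset.mem_filter, Finset.mem_univ, true_and] at hk ⊢
    exact hk
  · intro k1 _ k2 _ h
    exact σ.injective h
  · intro k hk
    simp only [Finset.mem_filter, Finset.mem_univ, true_and] at hk ⊢
    exact ⟨σ.symm k, by simpa using hk, by simp⟩

lemma Ncnt_gam (x : Fin s → ℕ) (t : ℕ) : Ncnt (Gam x) t = Ncnt x t :=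
  Ncnt_perm x (Tuple.sort x) t

lemma monotone_gam (x : Fin s → ℕ) : Monotone (Gam x) := Tuple.monotone_sort x

/-- for monotone `g`, `g k ≤ t ↔ k + 1 ≤ Ncnt g t`. -/
lemma monotone_le_iff {g : Fin s → ℕ} (hg : Monotone g) (k : Fin s) (t : ℕ) :
    g k ≤ t ↔ (k : ℕ) + 1 ≤ Ncnt g t := by
  constructor
  · intro h
    have hsub : Finset.Iic k ⊆ Finset.univ.filter fun l => g l ≤ t := by
      intro l hl
      exact Finset.mem_filter.2 ⟨Finset.mem_univ l, le_trans (hg (Finset.mem_Iic.1 hl)) h⟩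
    calc (k : ℕ) + 1 = (Finset.Iic k).card := (Fin.card_Iic k).symm
      _ ≤ _ := Finset.card_le_card hsub
  · intro h
    by_contra hc
    have hsub : (Finset.univ.filter fun l => g l ≤ t) ⊆ Finset.Iio k := by
      intro l hl
      simp only [Finset.mem_filter, Finset.mem_univ, true_and] at hl
      rw [Finset.mem_Iio]
      by_contra hlk
      exact hc (le_trans (hg (not_lt.1 hlk)) hl)
    have hle : Ncnt g t ≤ (Finset.Iio k).card := Finset.card_le_card hsub
    rw [Fin.card_Iio] at hle
    omega
end Counting

section Move
variable {s : ℕ}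

/-- moving one unit from a coordinate `j` with `x j ≥ x i + 2` to coordinate `i`
strictly increases the sorted vector lexicographically. -/
lemma gam_move (x : Fin s → ℕ) (i j : Fin s) (hij : x i + 2 ≤ x j) :
    lexLt (Gam x) (Gam (fun k => if k = i then x i + 1 else if k = j then x j - 1 else x k)) := by
  set x' : Fin s → ℕ := fun k => if k = i then x i + 1 else if k = j then x j - 1 else x k with hx'
  have hne : i ≠ j := by
    intro h; rw [h] at hij; omega
  have vi : x' i = x i + 1 := by simp [hx']
  have vj : x' j = x j - 1 := by simp [hx', hne.symm]
  have vk : ∀ k, k ≠ i → k ≠ j → x' k = x k := by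
    intro k h1 h2; simp [hx', h1, h2]
  -- counting facts
  have hcnt_lt : ∀ t, t < x i → Ncnt x' t = Ncnt x t := by
    intro t ht
    unfold Ncnt
    congr 1
    apply Finset.filter_congr
    intro k _
    by_cases hk : k = i
    · rw [hk, vi]; omega
    · by_cases hkj : k = j
      · rw [hkj, vj]; omega
      · rw [vk k hk hkj]
  have hcnt_eq : Ncnt x' (x i) + 1 = Ncnt x (x i) := by
    have hset : (Finset.univ.filter fun k => x' k ≤ x i)
        = (Finset.univ.filter fun k => x k ≤ x i).erase i := by
      ext k
      simp only [Finset.mem_filter, Finset.mem_univ, true_and, Finset.mem_erase]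
      by_cases hk : k = i
      · rw [hk, vi]
        have h1 : ¬ (x i + 1 ≤ x i) := by omega
        simp [h1]
      · by_cases hkj : k = j
        · rw [hkj, vj]
          have h1 : ¬ (x j - 1 ≤ x i) := by omega
          have h2 : ¬ (x j ≤ x i) := by omega
          tauto
        · rw [vk k hk hkj]; tauto
    have hi_mem : i ∈ Finset.univ.filter fun k => x k ≤ x i :=
      Finset.mem_filter.2 ⟨Finset.mem_univ i, le_refl _⟩
    unfold Ncnt
    rw [hset, Finset.card_erase_of_mem hi_mem]
    have : 1 ≤ (Finset.univ.filter fun k => x k ≤ x i).card :=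
      Finset.card_pos.2 ⟨i, hi_mem⟩
    omega
  set P : ℕ := Ncnt x (x i) with hP
  have hP1 : 1 ≤ P := Finset.card_pos.2 ⟨i, Finset.mem_filter.2 ⟨Finset.mem_univ i, le_refl _⟩⟩
  have hPs : P ≤ s := by
    have := Finset.card_le_univ (Finset.univ.filter fun k => x k ≤ x i)
    exact this.trans_eq (Fintype.card_fin s)
  have hs : P - 1 < s := by omega
  set k0 : Fin s := ⟨P - 1, hs⟩ with hk0
  have hgk0 : Gam x k0 ≤ x i := by
    rw [monotone_le_iff (monotone_gam x), Ncnt_gam]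
    simp [hk0]; omega
  have hhk0 : x i < Gam x' k0 := by
    by_contra hcon
    push_neg at hcon
    rw [monotone_le_iff (monotone_gam x'), Ncnt_gam] at hcon
    simp only [hk0] at hcon
    omega
  refine ⟨k0, ?_, lt_of_le_of_lt hgk0 hhk0⟩
  intro l hl
  have hlP : (l : ℕ) + 1 ≤ P - 1 := by
    have : (l : ℕ) < P - 1 := hl
    omega
  have hgl : Gam x l ≤ x i := by
    rw [monotone_le_iff (monotone_gam x), Ncnt_gam]; omega
  have hhl : Gam x' l ≤ x i := by
    rw [monotone_le_iff (monotone_gam x'), Ncnt_gam]; omega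
  have h1 : Gam x l ≤ Gam x' l := by
    rcases lt_or_eq_of_le hhl with hlt | heq
    · have : (l : ℕ) + 1 ≤ Ncnt (Gam x') (Gam x' l) :=
        (monotone_le_iff (monotone_gam x') l _).1 (le_refl _)
      rw [monotone_le_iff (monotone_gam x), Ncnt_gam, ← hcnt_lt _ hlt, ← Ncnt_gam x']
      exact this
    · omega
  have h2 : Gam x' l ≤ Gam x l := by
    rcases lt_or_eq_of_le hgl with hlt | heq
    · have : (l : ℕ) + 1 ≤ Ncnt (Gam x) (Gam x l) :=
        (monotone_le_iff (monotone_gam x) l _).1 (le_refl _)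
      rw [monotone_le_iff (monotone_gam x'), Ncnt_gam, hcnt_lt _ hlt, ← Ncnt_gam x]
      exact this
    · omega
  omega

end Move

section Algebra
variable {K : Type*} [Field K] {s d : ℕ}

/-- shorthand for function → finsupp -/
noncomputable def Ff {s : ℕ} (g : Fin s → ℕ) : Fin s →₀ ℕ := Finsupp.equivFunOnFinite.symm g

@[simp] lemma Ff_apply {s : ℕ} (g : Fin s → ℕ) (k : Fin s) : Ff g k = g k := rfl

lemma Ff_add {s : ℕ} (g h : Fin s → ℕ) : Ff (g + h) = Ff g + Ff h := by
  ext k; simp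

lemma Ff_le_iff {s : ℕ} (g h : Fin s → ℕ) : Ff g ≤ Ff h ↔ ∀ i, g i ≤ h i := by
  rw [Finsupp.le_def]
  rfl

/-- the exponent vector of `φ(x^m)` -/
noncomputable def Avec {s d : ℕ} (m : Vd s d →₀ ℕ) : Fin s →₀ ℕ :=
  m.sum fun u n => n • Ff u.1

lemma Avec_add (m₁ m₂ : Vd s d →₀ ℕ) : Avec (m₁ + m₂) = Avec m₁ + Avec m₂ :=
  Finsupp.sum_add_index' (fun u => by simp) (fun u n₁ n₂ => add_smul n₁ n₂ (Ff u.1))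

lemma Avec_single (u : Vd s d) (n : ℕ) : Avec (Finsupp.single u n) = n • Ff u.1 :=
  Finsupp.sum_single_index (by simp)

lemma Avec_apply (m : Vd s d →₀ ℕ) (i : Fin s) :
    Avec m i = m.sum fun u n => n * u.1 i := by
  classical
  rw [Avec, Finsupp.sum_apply]
  apply Finsupp.sum_congr
  intro u _
  simp

lemma prod_X_pow (g : Fin s → ℕ) :
    (∏ i, (X i : MvPolynomial (Fin s) K) ^ g i) = monomial (Ff g) 1 := by
  rw [← prod_X_pow_eq_monomial]
  rw [Finset.prod_subset (Finset.subset_univ (Ff g).support)]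
  · exact Finset.prod_congr rfl fun i _ => by rw [Ff_apply]
  · intro i _ hi
    rw [Finsupp.notMem_support_iff] at hi
    rw [hi, pow_zero]

lemma phi_monomial_s13 (m : Vd s d →₀ ℕ) :
    phi K s d (monomial m 1) = monomial (Avec m) 1 := by
  rw [phi, aeval_monomial, map_one, one_mul]
  have h1 : (m.prod fun u n => (∏ i, (X i : MvPolynomial (Fin s) K) ^ u.1 i) ^ n)
      = m.prod fun u n => monomial (n • Ff u.1) 1 := by
    apply Finsupp.prod_congr
    intro u _
    rw [_root_.prod_X_pow, monomial_pow, one_pow]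
  rw [h1, Avec, monomial_finsupp_sum_index, C_1, one_mul]

lemma phi_monomial_mem_span_iff (m : Vd s d →₀ ℕ) (a : Fin s → ℕ) :
    phi K s d (monomial m 1) ∈
      Ideal.span {(∏ i, (X i : MvPolynomial (Fin s) K) ^ a i)} ↔ Ff a ≤ Avec m := by
  rw [phi_monomial_s13, _root_.prod_X_pow, Ideal.mem_span_singleton, monomial_dvd_monomial]
  simp only [one_dvd, and_true]
  constructor
  · rintro (h | h)
    · exact absurd h one_ne_zero
    · exact h
  · exact Or.inr

lemma Fdeg_add {σ : Type*} (m₁ m₂ : σ →₀ ℕ) : Fdeg (m₁ + m₂) = Fdeg m₁ + Fdeg m₂ :=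
  Finsupp.sum_add_index' (fun _ => rfl) (fun _ n₁ n₂ => rfl)

lemma Fdeg_single {σ : Type*} (u : σ) (n : ℕ) : Fdeg (Finsupp.single u n) = n :=
  Finsupp.sum_single_index rfl

lemma exists_single_le {σ : Type*} (m : σ →₀ ℕ) (h : 1 ≤ Fdeg m) :
    ∃ u : σ, ∃ m₁ : σ →₀ ℕ, m = Finsupp.single u 1 + m₁ ∧ u ∈ m.support := by
  have hne : m ≠ 0 := by
    rintro rfl
    simp [Fdeg] at h
  obtain ⟨u, hu⟩ := Finsupp.support_nonempty_iff.2 hne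
  refine ⟨u, m - Finsupp.single u 1, ?_, hu⟩
  have hle : Finsupp.single u 1 ≤ m := by
    rw [Finsupp.single_le_iff]
    exact Nat.one_le_iff_ne_zero.2 (Finsupp.mem_support_iff.1 hu)
  rw [add_comm]
  exact (tsub_add_cancel_of_le hle).symm

end Algebra

section Exchange
variable {K : Type*} [Field K] {s d : ℕ}

lemma varGammaLt_asymm {s : ℕ} {a b : Fin s → ℕ} (h : varGammaLt a b) : ¬ varGammaLt b a :=
  fun h' => varGammaLt_irrefl a (varGammaLt_trans h h')

/-- a finite nonempty set of variables has a `≺_Γ`-least element. -/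
lemma exists_min_varGamma (S : Finset (Vd s d)) (hS : S.Nonempty) :
    ∃ z ∈ S, ∀ w ∈ S, z = w ∨ varGammaLt z.1 w.1 := by
  induction hS using Finset.Nonempty.cons_induction with
  | singleton a => exact ⟨a, Finset.mem_singleton_self a, by
      intro w hw
      rw [Finset.mem_singleton] at hw
      exact Or.inl hw.symm⟩
  | cons a S ha hS ih =>
    obtain ⟨z, hz, hmin⟩ := ih
    by_cases haz : a = z ∨ varGammaLt a.1 z.1
    · refine ⟨a, Finset.mem_cons_self a S, ?_⟩
      intro w hw
      rcases Finset.mem_cons.1 hw with rfl | hw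
      · exact Or.inl rfl
      · rcases haz with rfl | haz
        · exact hmin w hw
        · rcases hmin w hw with rfl | h
          · exact Or.inr haz
          · exact Or.inr (varGammaLt_trans haz h)
    · push_neg at haz
      refine ⟨z, Finset.mem_cons.2 (Or.inr hz), ?_⟩
      intro w hw
      rcases Finset.mem_cons.1 hw with rfl | hw
      · have : w ≠ z := fun h => haz.1 h
        rcases varGammaLt_total (fun hc => this (Subtype.ext hc)) with h | h
        · exact absurd h haz.2
        · exact Or.inr h
      · exact hmin w hw

/-- The exchange inequality: replacing `x·y` by `x'·y'` with `x' ≺ x` and `x' ≺ y`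
gives a `t`-smaller monomial. -/
lemma exchange_lt (t : TermOrder (Vd s d))
    (ht : IsRevLex (fun a b : Vd s d => varGammaLt a.1 b.1) t)
    (m₀ : Vd s d →₀ ℕ) (x y x' y' : Vd s d)
    (hx : varGammaLt x'.1 x.1) (hy : varGammaLt x'.1 y.1) :
    t.lo.lt (m₀ + Finsupp.single x' 1 + Finsupp.single y' 1)
      (m₀ + Finsupp.single x 1 + Finsupp.single y 1) := by
  classical
  set m' : Vd s d →₀ ℕ := m₀ + Finsupp.single x' 1 + Finsupp.single y' 1 with hm'
  set m : Vd s d →₀ ℕ := m₀ + Finsupp.single x 1 + Finsupp.single y 1 with hm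
  have hx'x : x' ≠ x := fun h => varGammaLt_ne hx (congrArg Subtype.val h)
  have hx'y : x' ≠ y := fun h => varGammaLt_ne hy (congrArg Subtype.val h)
  have happ : ∀ z : Vd s d, m z = m₀ z + (if z = x then 1 else 0) + (if z = y then 1 else 0) := by
    intro z
    simp [hm, Finsupp.single_apply, eq_comm]
  have happ' : ∀ z : Vd s d,
      m' z = m₀ z + (if z = x' then 1 else 0) + (if z = y' then 1 else 0) := by
    intro z
    simp [hm', Finsupp.single_apply, eq_comm]
  have hchanged : ∀ z : Vd s d, z ≠ x → z ≠ y → z ≠ x' → z ≠ y' → m' z = m z := by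
    intro z h1 h2 h3 h4
    rw [happ, happ', if_neg h1, if_neg h2, if_neg h3, if_neg h4]
  set C : Finset (Vd s d) := ({x, y, x', y'} : Finset (Vd s d)).filter fun z => m' z ≠ m z
    with hC
  have hx'C : x' ∈ C := by
    rw [hC, Finset.mem_filter]
    refine ⟨by simp, ?_⟩
    rw [happ, happ', if_neg hx'x, if_neg hx'y, if_pos rfl]
    omega
  obtain ⟨z, hzC, hzmin⟩ := exists_min_varGamma C ⟨x', hx'C⟩
  have hzne : m' z ≠ m z := (Finset.mem_filter.1 hzC).2
  have hzx' : z = x' ∨ varGammaLt z.1 x'.1 := hzmin x' hx'C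
  have hznotxy : z ≠ x ∧ z ≠ y := by
    constructor
    · rintro rfl
      rcases hzx' with rfl | h
      · exact varGammaLt_irrefl _ hx
      · exact varGammaLt_asymm h hx
    · rintro rfl
      rcases hzx' with rfl | h
      · exact varGammaLt_irrefl _ hy
      · exact varGammaLt_asymm h hy
  have hzgain : m z < m' z := by
    rcases Nat.lt_or_ge (m z) (m' z) with h | h
    · exact h
    rcases Nat.lt_or_ge (m' z) (m z) with h' | h'
    · exfalso
      rw [happ, happ', if_neg hznotxy.1, if_neg hznotxy.2] at h'
      omega
    · omega
  rw [ht]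
  right
  constructor
  · rw [hm, hm']
    simp only [Fdeg_add, Fdeg_single]
  · refine ⟨z, hzgain, ?_⟩
    intro k hk
    by_contra hkne
    have hkC : k ∈ C := by
      rw [hC, Finset.mem_filter]
      refine ⟨?_, hkne⟩
      by_contra hknot
      simp only [Finset.mem_insert, Finset.mem_singleton] at hknot
      push_neg at hknot
      exact hkne (hchanged k hknot.1 hknot.2.1 hknot.2.2.1 hknot.2.2.2)
    rcases hzmin k hkC with rfl | h
    · exact varGammaLt_irrefl _ hk
    · exact varGammaLt_asymm h hk

/-- if `m'` maps to the same monomial and is `t`-smaller, then `x^m` is in the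
initial ideal of the kernel. -/
lemma lo_ne_of_lt {X : Type*} (lo : LinearOrder X) {a b : X} (h : lo.lt a b) : a ≠ b := by
  letI := lo; exact ne_of_lt h

lemma lo_max_pair {X : Type*} (lo : LinearOrder X) {S : Finset X} {a b : X}
    (hmem : a ∈ S) (hsub : ∀ z ∈ S, z = a ∨ z = b) (hba : lo.lt b a) :
    @Finset.max X lo S = (a : WithBot X) := by
  letI := lo
  apply le_antisymm
  · apply Finset.max_le
    intro z hz
    rcases hsub z hz with rfl | rfl
    · exact le_refl _
    · exact WithBot.coe_le_coe.2 (le_of_lt hba)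
  · exact Finset.le_max hmem

lemma mem_initial_of_lt (t : TermOrder (Vd s d)) {m m' : Vd s d →₀ ℕ}
    (hA : Avec m' = Avec m) (hlt : t.lo.lt m' m) :
    monomial m (1 : K) ∈ initialIdeal t
      (RingHom.ker (phi K s d : MvPolynomial (Vd s d) K →+* MvPolynomial (Fin s) K)) := by
  set f : MvPolynomial (Vd s d) K := monomial m 1 - monomial m' 1 with hf
  have hmm' : m' ≠ m := lo_ne_of_lt t.lo hlt
  have hker : f ∈ RingHom.ker (phi K s d : MvPolynomial (Vd s d) K →+* MvPolynomial (Fin s) K) := by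
    rw [RingHom.mem_ker]
    have : (phi K s d : MvPolynomial (Vd s d) K →+* MvPolynomial (Fin s) K) f
        = phi K s d (monomial m 1) - phi K s d (monomial m' 1) := by
      simp [hf]
    rw [this, phi_monomial_s13, phi_monomial_s13, hA, sub_self]
  have hco : f.coeff m = 1 := by
    rw [hf, coeff_sub, coeff_monomial, coeff_monomial, if_pos rfl, if_neg hmm']
    ring
  have hne : f ≠ 0 := fun h => by simp [h] at hco
  have hmem : m ∈ f.support := by
    rw [mem_support_iff, hco]; exact one_ne_zero
  have hsup : f.support ⊆ {m, m'} := by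
    intro z hz
    rw [mem_support_iff, hf, coeff_sub, coeff_monomial, coeff_monomial] at hz
    by_cases h1 : m = z
    · simp [h1]
    · by_cases h2 : m' = z
      · simp [h2]
      · rw [if_neg h1, if_neg h2] at hz
        simpa using hz
  have hlead : t.lead f = m := by
    have hsub' : ∀ z ∈ f.support, z = m ∨ z = m' := by
      intro z hz
      rcases Finset.mem_insert.1 (hsup hz) with rfl | hz'
      · exact Or.inl rfl
      · exact Or.inr (Finset.mem_singleton.1 hz')
    have hmax := lo_max_pair t.lo hmem hsub' hlt
    show WithBot.unbotD 0 (@Finset.max _ t.lo f.support) = m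
    rw [hmax]
    rfl
  exact Ideal.subset_span ⟨f, hker, hne, by rw [hlead]⟩

/-- monomial ideals are closed under monomial multiples. -/
lemma monomial_mem_of_le {I : Ideal (MvPolynomial (Vd s d) K)} {b m : Vd s d →₀ ℕ}
    (hbm : b ≤ m) (hb : monomial b (1 : K) ∈ I) : monomial m (1 : K) ∈ I := by
  have : monomial m (1 : K) = monomial b 1 * monomial (m - b) 1 := by
    rw [monomial_mul, one_mul, add_tsub_cancel_of_le hbm]
  rw [this]
  exact Ideal.mul_mem_right _ _ hb

end Exchange

section CoordBound
variable {K : Type*} [Field K] {s d : ℕ}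

lemma sum_move (x : Fin s → ℕ) (i j : Fin s) (hij : i ≠ j) (hj : 1 ≤ x j) :
    (∑ k, (if k = i then x i + 1 else if k = j then x j - 1 else x k)) = ∑ k, x k := by
  classical
  have hji : j ≠ i := hij.symm
  have hjmem : j ∈ Finset.univ.erase i := Finset.mem_erase.2 ⟨hji, Finset.mem_univ j⟩
  rw [← Finset.add_sum_erase _ _ (Finset.mem_univ i), ← Finset.add_sum_erase _ x (Finset.mem_univ i),
    ← Finset.add_sum_erase _ _ hjmem, ← Finset.add_sum_erase _ x hjmem]
  have hcongr : ∑ k ∈ (Finset.univ.erase i).erase j,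
      (if k = i then x i + 1 else if k = j then x j - 1 else x k)
      = ∑ k ∈ (Finset.univ.erase i).erase j, x k := by
    apply Finset.sum_congr rfl
    intro k hk
    have h1 := Finset.mem_erase.1 hk
    have h2 := Finset.mem_erase.1 h1.2
    rw [if_neg h2.1, if_neg h1.1]
  rw [hcongr, if_pos rfl, if_neg hji, if_pos rfl]
  omega

/-- Key deduction: in a standard monomial `m = m₀ + x + y` with `x ⪯ y`
and `y i ≥ 1`, the variable `x` satisfies `x j ≤ x i + 1` for all `j`. -/
lemma coord_bound (t : TermOrder (Vd s d))
    (ht : IsRevLex (fun a b : Vd s d => varGammaLt a.1 b.1) t)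
    {m : Vd s d →₀ ℕ}
    (hstd : monomial m (1 : K) ∉ initialIdeal t
      (RingHom.ker (phi K s d : MvPolynomial (Vd s d) K →+* MvPolynomial (Fin s) K)))
    (x y : Vd s d) (m₀ : Vd s d →₀ ℕ)
    (hdecomp : m = m₀ + Finsupp.single x 1 + Finsupp.single y 1)
    (hxy : x = y ∨ varGammaLt x.1 y.1)
    (i : Fin s) (hyi : 1 ≤ y.1 i) (j : Fin s) : x.1 j ≤ x.1 i + 1 := by
  by_contra hcon
  push_neg at hcon
  have hij2 : x.1 i + 2 ≤ x.1 j := hcon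
  have hij : i ≠ j := by
    intro h; rw [h] at hij2; omega
  have hxj : 1 ≤ x.1 j := by omega
  -- the rebalanced variables
  set x' : Vd s d := ⟨fun k => if k = i then x.1 i + 1 else if k = j then x.1 j - 1 else x.1 k,
    by rw [sum_move x.1 i j hij hxj]; exact x.2⟩ with hx'def
  set y' : Vd s d := ⟨fun k => if k = j then y.1 j + 1 else if k = i then y.1 i - 1 else y.1 k,
    by rw [sum_move y.1 j i hij.symm hyi]; exact y.2⟩ with hy'def
  have hgam : lexLt (Gam x.1) (Gam x'.1) := gam_move x.1 i j hij2
  have hx'x : varGammaLt x'.1 x.1 := Or.inl hgam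
  have hx'y : varGammaLt x'.1 y.1 := by
    rcases hxy with h | h
    · rw [← h]; exact hx'x
    · exact varGammaLt_trans hx'x h
  have hAv : Avec (m₀ + Finsupp.single x' 1 + Finsupp.single y' 1)
      = Avec (m₀ + Finsupp.single x 1 + Finsupp.single y 1) := by
    rw [Avec_add, Avec_add, Avec_add, Avec_add, Avec_single, Avec_single, Avec_single,
      Avec_single, one_smul, one_smul, one_smul, one_smul]
    rw [add_assoc, add_assoc]
    congr 1
    ext k
    simp only [Finsupp.add_apply, Ff_apply, hx'def, hy'def]
    by_cases hki : k = i
    · rw [hki, if_pos rfl, if_neg hij, if_pos rfl]; omega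
    · by_cases hkj : k = j
      · rw [hkj, if_neg hij.symm, if_pos rfl, if_pos rfl]; omega
      · rw [if_neg hki, if_neg hkj, if_neg hkj, if_neg hki]
  have hlt := exchange_lt t ht m₀ x y x' y' hx'x hx'y
  rw [← hdecomp] at hlt hAv
  exact hstd (mem_initial_of_lt t hAv hlt)

/-- lower bound on a near-maximal coordinate. -/
lemma coord_lb (u : Vd s d) (i : Fin s) (h : ∀ j, u.1 j ≤ u.1 i + 1) :
    d + 1 ≤ s * u.1 i + s := by
  have hs : 0 < s := i.pos
  have hd : u.1 i + ∑ j ∈ Finset.univ.erase i, u.1 j = d := by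
    rw [Finset.add_sum_erase _ _ (Finset.mem_univ i)]
    exact u.2
  have hb : ∑ j ∈ Finset.univ.erase i, u.1 j ≤ (s - 1) * (u.1 i + 1) := by
    calc ∑ j ∈ Finset.univ.erase i, u.1 j ≤ ∑ _j ∈ Finset.univ.erase i, (u.1 i + 1) :=
          Finset.sum_le_sum fun j _ => h j
      _ = (Finset.univ.erase i).card * (u.1 i + 1) := by
          rw [Finset.sum_const, smul_eq_mul]
      _ = (s - 1) * (u.1 i + 1) := by
          rw [Finset.card_erase_of_mem (Finset.mem_univ i), Finset.card_univ, Fintype.card_fin]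
  obtain ⟨X, hX⟩ : ∃ X, X = s * (u.1 i + 1) := ⟨_, rfl⟩
  have h1 : (s - 1) * (u.1 i + 1) + (u.1 i + 1) = X := by
    rw [hX, Nat.sub_one_mul]
    exact tsub_add_cancel_of_le (Nat.le_mul_of_pos_left _ hs)
  have h2 : s * u.1 i + s = X := by rw [hX]; ring
  omega

end CoordBound

section Main
variable {K : Type*} [Field K] {s d : ℕ}

lemma support_nonempty_of_fdeg {σ : Type*} {m : σ →₀ ℕ} (h : 1 ≤ Fdeg m) :
    m.support.Nonempty := by
  rw [Finsupp.support_nonempty_iff]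
  rintro rfl
  simp [Fdeg] at h

lemma single_le_of_mem {σ : Type*} {m : σ →₀ ℕ} {u : σ} (h : u ∈ m.support) :
    Finsupp.single u 1 ≤ m := by
  rw [Finsupp.single_le_iff]
  exact Nat.one_le_iff_ne_zero.2 (Finsupp.mem_support_iff.1 h)

lemma find_pair (t : TermOrder (Vd s d))
    (ht : IsRevLex (fun a b : Vd s d => varGammaLt a.1 b.1) t)
    (a : Fin s → ℕ) (h2d : s * (Finset.univ.sup a + 1) ≤ 2 * d)
    {m : Vd s d →₀ ℕ} (hdeg : 3 ≤ Fdeg m)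
    (hstd : monomial m (1 : K) ∉ initialIdeal t
      (RingHom.ker (phi K s d : MvPolynomial (Vd s d) K →+* MvPolynomial (Fin s) K)))
    (hmem : Ff a ≤ Avec m) :
    ∃ u v : Vd s d, ∃ m₂ : Vd s d →₀ ℕ,
      m = m₂ + Finsupp.single u 1 + Finsupp.single v 1 ∧ ∀ i, a i ≤ u.1 i + v.1 i := by
  classical
  obtain ⟨u, huS, humin⟩ := exists_min_varGamma m.support (support_nonempty_of_fdeg (by omega))
  have hdec1 : m = (m - Finsupp.single u 1) + Finsupp.single u 1 :=
    (tsub_add_cancel_of_le (single_le_of_mem huS)).symm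
  set m₁ := m - Finsupp.single u 1 with hm₁def
  have hFdeg1 : Fdeg m = Fdeg m₁ + 1 := by
    conv_lhs => rw [hdec1]
    rw [Fdeg_add, Fdeg_single]
  obtain ⟨v, hvS, hvmin⟩ := exists_min_varGamma m₁.support (support_nonempty_of_fdeg (by omega))
  have hdec2 : m₁ = (m₁ - Finsupp.single v 1) + Finsupp.single v 1 :=
    (tsub_add_cancel_of_le (single_le_of_mem hvS)).symm
  set m₂ := m₁ - Finsupp.single v 1 with hm₂def
  have hdecomp : m = m₂ + Finsupp.single u 1 + Finsupp.single v 1 := by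
    conv_lhs => rw [hdec1]
    conv_lhs => rw [hdec2]
    rw [add_right_comm]
  refine ⟨u, v, m₂, hdecomp, ?_⟩
  intro i
  have hAm : Avec m i = Avec m₂ i + u.1 i + v.1 i := by
    conv_lhs => rw [hdecomp]
    rw [Avec_add, Avec_add, Avec_single, Avec_single, one_smul, one_smul,
      Finsupp.add_apply, Finsupp.add_apply, Ff_apply, Ff_apply]
  have hai : a i ≤ Avec m i := by
    have := Finsupp.le_def.1 hmem i
    rwa [Ff_apply] at this
  by_cases hz : Avec m₂ i = 0
  · omega
  · -- there is a third factor with positive i-th coordinate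
    have hex : ∃ w ∈ m₂.support, 1 ≤ w.1 i := by
      by_contra hcon
      push_neg at hcon
      apply hz
      rw [Avec_apply, Finsupp.sum]
      apply Finset.sum_eq_zero
      intro w hw
      rw [Nat.lt_one_iff.1 (hcon w hw), mul_zero]
    obtain ⟨w, hwS, hwi⟩ := hex
    have hdec3 : m₂ = (m₂ - Finsupp.single w 1) + Finsupp.single w 1 :=
      (tsub_add_cancel_of_le (single_le_of_mem hwS)).symm
    set m₃ := m₂ - Finsupp.single w 1 with hm₃def
    have hw2 : 1 ≤ m₂ w := Nat.one_le_iff_ne_zero.2 (Finsupp.mem_support_iff.1 hwS)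
    have hwm : w ∈ m.support := by
      rw [Finsupp.mem_support_iff]
      rw [hdecomp, Finsupp.add_apply, Finsupp.add_apply]
      omega
    have hwm1 : w ∈ m₁.support := by
      rw [Finsupp.mem_support_iff]
      rw [hdec2, Finsupp.add_apply]
      omega
    have huw := humin w hwm
    have hvw := hvmin w hwm1
    have hclaim1 : ∀ j, u.1 j ≤ u.1 i + 1 := by
      intro j
      refine coord_bound t ht hstd u w (m₃ + Finsupp.single v 1) ?_ huw i hwi j
      rw [hdecomp]
      conv_lhs => rw [hdec3]
      abel
    have hclaim2 : ∀ j, v.1 j ≤ v.1 i + 1 := by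
      intro j
      refine coord_bound t ht hstd v w (m₃ + Finsupp.single u 1) ?_ hvw i hwi j
      rw [hdecomp]
      conv_lhs => rw [hdec3]
      abel
    have hu_lb := coord_lb u i hclaim1
    have hv_lb := coord_lb v i hclaim2
    have hSa : a i ≤ Finset.univ.sup a := Finset.le_sup (Finset.mem_univ i)
    set S := Finset.univ.sup a with hSdef
    rw [Nat.mul_add, Nat.mul_one] at h2d
    have hkey : s * S < s * (u.1 i + v.1 i + 1) := by
      have hexp : s * (u.1 i + v.1 i + 1) = s * u.1 i + s * v.1 i + s := by ring
      rw [hexp]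
      linarith
    have hfin : S < u.1 i + v.1 i + 1 := lt_of_mul_lt_mul_left hkey (Nat.zero_le s)
    omega

end Main

/-- if `d ≥ s(a*+1)/2`, the ideal `L_{≺_Γ}(⟨y^a⟩)` generated by all
monomials of `φ_d⁻¹(⟨y^a⟩)` outside `in_{≺_Γ}(ker φ_d)` is generated by monomials of
degree at most two. -/
theorem stmt13 (K : Type*) [Field K] (s d : ℕ)
    (t : TermOrder (Vd s d))
    (ht : IsRevLex (fun a b : Vd s d => varGammaLt a.1 b.1) t)
    (a : Fin s → ℕ)
    (h2d : s * (Finset.univ.sup a + 1) ≤ 2 * d) :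
    ∃ B : Set (Vd s d →₀ ℕ), (∀ m ∈ B, Fdeg m ≤ 2) ∧
      Ideal.span { p : MvPolynomial (Vd s d) K | ∃ m : Vd s d →₀ ℕ,
          p = monomial m (1 : K) ∧
          phi K s d (monomial m 1) ∈
            Ideal.span {(∏ i, (X i : MvPolynomial (Fin s) K) ^ a i)} ∧
          monomial m (1 : K) ∉ initialIdeal t
            (RingHom.ker (phi K s d : MvPolynomial (Vd s d) K →+* MvPolynomial (Fin s) K)) }
        = Ideal.span ((fun m => monomial m (1 : K)) '' B) := by
  classical
  refine ⟨{m : Vd s d →₀ ℕ | Fdeg m ≤ 2 ∧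
      phi K s d (monomial m 1) ∈
        Ideal.span {(∏ i, (X i : MvPolynomial (Fin s) K) ^ a i)} ∧
      monomial m (1 : K) ∉ initialIdeal t
        (RingHom.ker (phi K s d : MvPolynomial (Vd s d) K →+* MvPolynomial (Fin s) K))},
    fun m hm => hm.1, ?_⟩
  apply le_antisymm
  · rw [Ideal.span_le]
    rintro p ⟨m, rfl, hphi, hstd⟩
    by_cases hdeg : Fdeg m ≤ 2
    · exact Ideal.subset_span ⟨m, ⟨hdeg, hphi, hstd⟩, rfl⟩
    · push_neg at hdeg
      have hdeg3 : 3 ≤ Fdeg m := hdeg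
      have hmem : Ff a ≤ Avec m := (phi_monomial_mem_span_iff m a).1 hphi
      obtain ⟨u, v, m₂, hdecomp, hcov⟩ := find_pair t ht a h2d hdeg3 hstd hmem
      set b := Finsupp.single u 1 + Finsupp.single v 1 with hbdef
      have hble : b ≤ m := by
        rw [hdecomp, add_assoc, ← hbdef]
        exact le_add_self
      have hbB : b ∈ {m : Vd s d →₀ ℕ | Fdeg m ≤ 2 ∧
          phi K s d (monomial m 1) ∈
            Ideal.span {(∏ i, (X i : MvPolynomial (Fin s) K) ^ a i)} ∧
          monomial m (1 : K) ∉ initialIdeal t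
            (RingHom.ker (phi K s d :
              MvPolynomial (Vd s d) K →+* MvPolynomial (Fin s) K))} := by
        refine ⟨by rw [hbdef, Fdeg_add, Fdeg_single, Fdeg_single], ?_, ?_⟩
        · rw [phi_monomial_mem_span_iff]
          rw [hbdef, Avec_add, Avec_single, Avec_single, one_smul, one_smul, Finsupp.le_def]
          intro i
          rw [Finsupp.add_apply, Ff_apply, Ff_apply, Ff_apply]
          exact hcov i
        · exact fun hc => hstd (monomial_mem_of_le hble hc)
      have heq : monomial m (1 : K) = monomial (m - b) 1 * monomial b 1 := by
        rw [monomial_mul, one_mul, tsub_add_cancel_of_le hble]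
      rw [heq]
      exact Ideal.mul_mem_left _ _ (Ideal.subset_span ⟨b, hbB, rfl⟩)
  · rw [Ideal.span_le]
    rintro p ⟨m, hm, rfl⟩
    exact Ideal.subset_span ⟨m, rfl, hm.2.1, hm.2.2⟩
end
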